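/- arXiv:1910.05990 — 3 statements merged into one kernel-verified Lean document; each statement's English description precedes it below -/
import Mathlib

section
/- If α > nt/2, then the average-power constraint is inactive: C_H(A, αA) = C_H(A, (nt/2)A). -/
/-!
The reflection `x ↦ A • 1 - x` maps the box `[0, A]^nt` onto itself and turns `E[‖X‖₁]` into
`nt A - E[‖X‖₁]`. Together with `y ↦ H (A • 1) - y` and the symmetry of the Gaussian noise it is
a bijection of the pair `(X, Y)`, so it does not change the mutual information. Hence every
admissible input whose average power exceeds `nt A / 2` can be replaced by its reflection, which
meets the constraint `nt A / 2` and achieves the same rate.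

Invariance of the (real-valued, junk-prone) divergence under a bijection needs the joint law to be
absolutely continuous with respect to the product of its marginals; this holds because all shifts
of the Gaussian noise are equivalent to Lebesgue measure.
-/

open MeasureTheory ProbabilityTheory Matrix Filter Topology
open scoped ENNReal NNReal BigOperators

noncomputable section

namespace MimoOptical

variable {nt nr : ℕ}

/-- The law of a standard Gaussian vector `Z ~ N(0, I_n)` on `ℝ^n`. -/
def stdGaussian (n : ℕ) : Measure (Fin n → ℝ) :=
  Measure.pi fun _ => gaussianReal 0 1

/-- Real-valued Kullback–Leibler divergence `∫ log (dμ/dν) dμ`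
(with junk value if not absolutely continuous or not integrable). -/
def klDivR {Ω : Type*} [MeasurableSpace Ω] (μ ν : Measure Ω) : ℝ :=
  ∫ ω, Real.log (μ.rnDeriv ν ω).toReal ∂μ

/-- Mutual information of a joint law on a product space: the KL divergence between
the joint law and the product of its marginals. -/
def mutualInfoJoint {β γ : Type*} [MeasurableSpace β] [MeasurableSpace γ]
    (π : Measure (β × γ)) : ℝ :=
  klDivR π ((π.map Prod.fst).prod (π.map Prod.snd))

/-- Joint law of `(X, H X + Z)` where `X ~ μ` and `Z ~ N(0, I_nr)` is independent of `X`. -/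
def jointLaw (H : Matrix (Fin nr) (Fin nt) ℝ) (μ : Measure (Fin nt → ℝ)) :
    Measure ((Fin nt → ℝ) × (Fin nr → ℝ)) :=
  (μ.prod (stdGaussian nr)).map (fun p => (p.1, H.mulVec p.1 + p.2))

/-- An admissible input distribution: a probability measure on `[0, A]^nt`
with average power `E[‖X‖₁] ≤ avg`. -/
def Admissible (nt : ℕ) (A avg : ℝ) (μ : Measure (Fin nt → ℝ)) : Prop :=
  IsProbabilityMeasure μ ∧ (∀ᵐ x ∂μ, ∀ k, x k ∈ Set.Icc (0 : ℝ) A) ∧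
    (∫ x, ∑ k, |x k| ∂μ) ≤ avg

/-- Capacity of the MIMO optical intensity channel with peak power `A` and
average power `avg`. -/
def capacity (H : Matrix (Fin nr) (Fin nt) ℝ) (A avg : ℝ) : ℝ :=
  sSup { c | ∃ μ : Measure (Fin nt → ℝ),
    Admissible nt A avg μ ∧ c = mutualInfoJoint (jointLaw H μ) }

/-- The zonotope `R(M) = { M λ : λ ∈ [0,A]^k }`. -/
def zonotope {n k : ℕ} (M : Matrix (Fin n) (Fin k) ℝ) (A : ℝ) : Set (Fin n → ℝ) :=
  { x | ∃ lam : Fin k → ℝ, (∀ i, lam i ∈ Set.Icc 0 A) ∧ x = M.mulVec lam }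

/-- The collection `𝒰` of `nr`-element subsets of columns that are linearly independent. -/
def goodSets (H : Matrix (Fin nr) (Fin nt) ℝ) : Set (Finset (Fin nt)) :=
  { U | U.card = nr ∧ LinearIndependent ℝ (fun j : {x // x ∈ U} => fun i => H i j.1) }

/-- The square matrix `H_U` whose columns are the columns of `H` indexed by `U`
(junk value, the identity, if `U.card ≠ nr`). -/
def HU (H : Matrix (Fin nr) (Fin nt) ℝ) (U : Finset (Fin nt)) :
    Matrix (Fin nr) (Fin nr) ℝ :=
  if h : U.card = nr then H.submatrix id (fun i => U.orderEmbOfFin h i) else 1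

/-- `a_{U,j} = 1ᵀ H_U⁻¹ h_j`. -/
def aUj (H : Matrix (Fin nr) (Fin nt) ℝ) (U : Finset (Fin nt)) (j : Fin nt) : ℝ :=
  ∑ i, ((HU H U)⁻¹).mulVec (fun r => H r j) i

/-- `g_{U,j} = 1` if `a_{U,j} > 1` and `0` otherwise. -/
def gUj (H : Matrix (Fin nr) (Fin nt) ℝ) (U : Finset (Fin nt)) (j : Fin nt) : ℝ :=
  if 1 < aUj H U j then 1 else 0

/-- `s_U = Σ_{j ∈ Uᶜ} g_{U,j}`. -/
def sU (H : Matrix (Fin nr) (Fin nt) ℝ) (U : Finset (Fin nt)) : ℝ :=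
  ∑ j ∈ Uᶜ, gUj H U j

/-- `v_U = A Σ_{j ∈ Uᶜ} g_{U,j} h_j`. -/
def vU (H : Matrix (Fin nr) (Fin nt) ℝ) (A : ℝ) (U : Finset (Fin nt)) : Fin nr → ℝ :=
  fun r => A * ∑ j ∈ Uᶜ, gUj H U j * H r j

/-- The parallelepiped `D_U = R(H_U)`. -/
def DU (H : Matrix (Fin nr) (Fin nt) ℝ) (A : ℝ) (U : Finset (Fin nt)) :
    Set (Fin nr → ℝ) :=
  zonotope (HU H U) A

/-- The shifted parallelepiped `v_U + D_U`. -/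
def cell (H : Matrix (Fin nr) (Fin nt) ℝ) (A : ℝ) (U : Finset (Fin nt)) :
    Set (Fin nr → ℝ) :=
  (fun d => vU H A U + d) '' DU H A U

/-- `V_H = Σ_{U ∈ 𝒰} |det H_U|`. -/
def VH (H : Matrix (Fin nr) (Fin nt) ℝ) : ℝ :=
  ∑ᶠ U ∈ goodSets H, |(HU H U).det|

/-- `q_U = |det H_U| / V_H`. -/
def qU (H : Matrix (Fin nr) (Fin nt) ℝ) (U : Finset (Fin nt)) : ℝ :=
  |(HU H U).det| / VH H

/-- `α_th = nr/2 + Σ_{U ∈ 𝒰} s_U q_U`. -/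
def alphaTh (H : Matrix (Fin nr) (Fin nt) ℝ) : ℝ :=
  (nr : ℝ) / 2 + ∑ᶠ U ∈ goodSets H, sU H U * qU H U

/-- A probability vector on `𝒰`. -/
def ProbVec (H : Matrix (Fin nr) (Fin nt) ℝ) (p : Finset (Fin nt) → ℝ) : Prop :=
  (∀ U, 0 ≤ p U) ∧ (∀ U, U ∉ goodSets H → p U = 0) ∧ (∑ᶠ U ∈ goodSets H, p U) = 1

/-- Kullback–Leibler divergence `D(p‖q)` between probability vectors on `𝒰`. -/
def Dkl (H : Matrix (Fin nr) (Fin nt) ℝ) (p q : Finset (Fin nt) → ℝ) : ℝ :=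
  ∑ᶠ U ∈ goodSets H, p U * Real.log (p U / q U)

/-- `σ_{U,ℓ}`: square root of the `ℓ`-th diagonal entry of `H_U⁻¹ (H_U⁻¹)ᵀ`. -/
def sigmaUl (H : Matrix (Fin nr) (Fin nt) ℝ) (U : Finset (Fin nt)) (ℓ : Fin nr) : ℝ :=
  Real.sqrt ((((HU H U)⁻¹) * ((HU H U)⁻¹)ᵀ) ℓ ℓ)

/-- The trace of the covariance matrix of `X̄ = H X` when `X ~ μ`. -/
def traceCov (H : Matrix (Fin nr) (Fin nt) ℝ) (μ : Measure (Fin nt → ℝ)) : ℝ :=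
  ∑ i, ((∫ x, (H.mulVec x i) ^ 2 ∂μ) - (∫ x, H.mulVec x i ∂μ) ^ 2)

/-- The Gaussian Q-function. -/
def Qf (x : ℝ) : ℝ :=
  ∫ t in Set.Ioi x, Real.exp (-t ^ 2 / 2) / Real.sqrt (2 * Real.pi)

/-- The high-SNR penalty `ν` due to the average-power constraint. -/
def nuVal (H : Matrix (Fin nr) (Fin nt) ℝ) (α : ℝ) : ℝ :=
  sSup { y | ∃ lam mu : ℝ,
    lam ∈ Set.Ioo (max 0 ((nr : ℝ) / 2 + α - alphaTh H)) (min ((nr : ℝ) / 2) α) ∧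
    0 < mu ∧
    1 / mu - Real.exp (-mu) / (1 - Real.exp (-mu)) = lam / (nr : ℝ) ∧
    y = (nr : ℝ) * (1 - Real.log (mu / (1 - Real.exp (-mu)))
          - mu * Real.exp (-mu) / (1 - Real.exp (-mu)))
        - sInf { d | ∃ p : Finset (Fin nt) → ℝ, ProbVec H p ∧
            (∑ᶠ U ∈ goodSets H, p U * sU H U) = α - lam ∧ d = Dkl H p (qU H) } }

end MimoOptical

namespace MeasureTheory.Measure

theorem absolutelyContinuous_pi {n : ℕ} {α : Fin n → Type*} [∀ i, MeasurableSpace (α i)]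
    {μ ν : ∀ i, Measure (α i)} [∀ i, SigmaFinite (μ i)] [∀ i, SigmaFinite (ν i)]
    (h : ∀ i, μ i ≪ ν i) : Measure.pi μ ≪ Measure.pi ν := by
  induction n with
  | zero => rw [pi_of_empty μ, pi_of_empty ν]
  | succ n ih =>
    rw [← (measurePreserving_piFinSuccAbove μ 0).symm.map_eq,
      ← (measurePreserving_piFinSuccAbove ν 0).symm.map_eq]
    exact ((h 0).prod (ih fun j => h _)).map (MeasurableEquiv.measurable _)

end MeasureTheory.Measure

namespace MimoOptical

theorem klDivR_map_measurableEquiv {β γ : Type*} [MeasurableSpace β] [MeasurableSpace γ]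
    (e : β ≃ᵐ γ) {μ ν : Measure β} [SigmaFinite μ] [SigmaFinite ν] (h : μ ≪ ν) :
    klDivR (μ.map e) (ν.map e) = klDivR μ ν := by
  -- `rnDeriv_map` is only a `ν`-a.e. identity; `h` transfers it to `μ`.
  have hrn : (fun x => (μ.map e).rnDeriv (ν.map e) (e x)) =ᵐ[μ] μ.rnDeriv ν :=
    h.ae_le (e.measurableEmbedding.rnDeriv_map μ ν)
  rw [klDivR, klDivR, integral_map e.measurable.aemeasurable
    (Measure.measurable_rnDeriv _ _).ennreal_toReal.log.aestronglyMeasurable]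
  exact integral_congr_ae (hrn.mono fun x hx => by simp only [hx])

theorem mutualInfoJoint_map_prodCongr {β β' γ γ' : Type*} [MeasurableSpace β]
    [MeasurableSpace β'] [MeasurableSpace γ] [MeasurableSpace γ'] (e₁ : β ≃ᵐ β') (e₂ : γ ≃ᵐ γ')
    {π : Measure (β × γ)} [IsFiniteMeasure π]
    (h : π ≪ (π.map Prod.fst).prod (π.map Prod.snd)) :
    mutualInfoJoint (π.map (e₁.prodCongr e₂)) = mutualInfoJoint π := by
  have hfst : (π.map (e₁.prodCongr e₂)).map Prod.fst = (π.map Prod.fst).map e₁ := by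
    rw [Measure.map_map measurable_fst (MeasurableEquiv.measurable _),
      Measure.map_map e₁.measurable measurable_fst]
    rfl
  have hsnd : (π.map (e₁.prodCongr e₂)).map Prod.snd = (π.map Prod.snd).map e₂ := by
    rw [Measure.map_map measurable_snd (MeasurableEquiv.measurable _),
      Measure.map_map e₂.measurable measurable_snd]
    rfl
  rw [mutualInfoJoint, hfst, hsnd, Measure.map_prod_map _ _ e₁.measurable e₂.measurable]
  exact klDivR_map_measurableEquiv (e₁.prodCongr e₂) h

instance (n : ℕ) : IsProbabilityMeasure (stdGaussian n) := by
  unfold stdGaussian; infer_instance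

theorem stdGaussian_map_neg (n : ℕ) : (stdGaussian n).map (fun z => -z) = stdGaussian n :=
  (measurePreserving_pi _ _ fun _ =>
    ⟨measurable_neg, by rw [gaussianReal_map_neg, neg_zero]⟩).map_eq

theorem stdGaussian_absolutelyContinuous_volume (n : ℕ) : stdGaussian n ≪ volume := by
  rw [stdGaussian, volume_pi]
  exact Measure.absolutelyContinuous_pi fun _ => gaussianReal_absolutelyContinuous 0 one_ne_zero

theorem volume_absolutelyContinuous_stdGaussian (n : ℕ) : volume ≪ stdGaussian n := by
  rw [stdGaussian, volume_pi]
  exact Measure.absolutelyContinuous_pi fun _ => gaussianReal_absolutelyContinuous' 0 one_ne_zero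

theorem stdGaussian_map_add_absolutelyContinuous {n : ℕ} (v w : Fin n → ℝ) :
    (stdGaussian n).map (v + ·) ≪ (stdGaussian n).map (w + ·) := by
  have hvol : volume.map (v + ·) = volume.map (w + ·) := by
    rw [map_add_left_eq_self, map_add_left_eq_self]
  refine ((stdGaussian_absolutelyContinuous_volume n).map (by fun_prop)).trans ?_
  rw [hvol]
  exact (volume_absolutelyContinuous_stdGaussian n).map (by fun_prop)

section JointLaw

variable {nt nr : ℕ} (H : Matrix (Fin nr) (Fin nt) ℝ) {μ : Measure (Fin nt → ℝ)}

instance [SFinite μ] : SFinite (jointLaw H μ) := by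
  unfold jointLaw; infer_instance

instance [IsProbabilityMeasure μ] : IsProbabilityMeasure (jointLaw H μ) :=
  Measure.isProbabilityMeasure_map (by fun_prop)

theorem jointLaw_map_fst [SFinite μ] : (jointLaw H μ).map Prod.fst = μ := by
  rw [jointLaw, Measure.map_map measurable_fst (by fun_prop)]
  exact Measure.map_fst_prod.trans (by simp)

theorem jointLaw_map_snd :
    (jointLaw H μ).map Prod.snd = (μ.prod (stdGaussian nr)).map (fun p => H *ᵥ p.1 + p.2) := by
  rw [jointLaw, Measure.map_map measurable_snd (by fun_prop)]
  rfl

theorem map_add_absolutelyContinuous_jointLaw_map_snd [SFinite μ] [NeZero μ] (x : Fin nt → ℝ) :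
    (stdGaussian nr).map (H *ᵥ x + ·) ≪ (jointLaw H μ).map Prod.snd := by
  refine Measure.AbsolutelyContinuous.mk fun S hS hS0 => ?_
  rw [jointLaw_map_snd, Measure.map_apply (by fun_prop) hS] at hS0
  obtain ⟨x', hx'⟩ := (Measure.measure_ae_null_of_prod_null hS0).exists
  refine stdGaussian_map_add_absolutelyContinuous _ (H *ᵥ x') ?_
  rw [Measure.map_apply (by fun_prop) hS]
  exact hx'

theorem jointLaw_absolutelyContinuous [SFinite μ] [NeZero μ] :
    jointLaw H μ ≪ ((jointLaw H μ).map Prod.fst).prod ((jointLaw H μ).map Prod.snd) := by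
  refine Measure.AbsolutelyContinuous.mk fun S hS hS0 => ?_
  rw [jointLaw_map_fst] at hS0
  have hf : Measurable fun p : (Fin nt → ℝ) × (Fin nr → ℝ) => (p.1, H *ᵥ p.1 + p.2) := by
    fun_prop
  rw [jointLaw, Measure.map_apply hf hS, Measure.prod_apply (hf hS)]
  refine (lintegral_congr_ae ?_).trans lintegral_zero
  filter_upwards [Measure.measure_ae_null_of_prod_null hS0] with x hx
  have := map_add_absolutelyContinuous_jointLaw_map_snd H (μ := μ) x hx
  rwa [Measure.map_apply (by fun_prop) (measurable_prodMk_left hS)] at this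

theorem jointLaw_map_subLeft [SFinite μ] (c : Fin nt → ℝ) :
    jointLaw H (μ.map (MeasurableEquiv.subLeft c)) = (jointLaw H μ).map
      ((MeasurableEquiv.subLeft c).prodCongr (MeasurableEquiv.subLeft (H *ᵥ c))) := by
  rw [jointLaw, jointLaw]
  nth_rw 1 [← stdGaussian_map_neg nr]
  rw [Measure.map_prod_map _ _ (MeasurableEquiv.measurable _) measurable_neg,
    Measure.map_map (by fun_prop) (by fun_prop), Measure.map_map (by fun_prop) (by fun_prop)]
  congr 1
  ext ⟨x, z⟩ : 1
  change (c - x, H *ᵥ (c - x) + -z) = (c - x, H *ᵥ c - (H *ᵥ x + z))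
  rw [Matrix.mulVec_sub]
  congr 1
  abel

theorem mutualInfoJoint_jointLaw_map_subLeft [IsProbabilityMeasure μ] (c : Fin nt → ℝ) :
    mutualInfoJoint (jointLaw H (μ.map (MeasurableEquiv.subLeft c))) =
      mutualInfoJoint (jointLaw H μ) := by
  rw [jointLaw_map_subLeft]
  exact mutualInfoJoint_map_prodCongr _ _ (jointLaw_absolutelyContinuous H)

end JointLaw

section Admissible

variable {n : ℕ} {A : ℝ} {μ : Measure (Fin n → ℝ)}

theorem Admissible.mono {avg avg' : ℝ} (h : Admissible n A avg μ) (hle : avg ≤ avg') :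
    Admissible n A avg' μ :=
  ⟨h.1, h.2.1, h.2.2.trans hle⟩

theorem ae_mem_box_map_subLeft (hbox : ∀ᵐ x ∂μ, ∀ k, x k ∈ Set.Icc 0 A) :
    ∀ᵐ x ∂μ.map (MeasurableEquiv.subLeft fun _ => A), ∀ k, x k ∈ Set.Icc 0 A := by
  rw [(MeasurableEquiv.subLeft _).measurableEmbedding.ae_map_iff]
  filter_upwards [hbox] with x hx k
  change A - x k ∈ Set.Icc 0 A
  constructor <;> linarith [(hx k).1, (hx k).2]

theorem integral_sum_abs_map_subLeft [IsProbabilityMeasure μ]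
    (hbox : ∀ᵐ x ∂μ, ∀ k, x k ∈ Set.Icc 0 A) :
    ∫ x, ∑ k, |x k| ∂μ.map (MeasurableEquiv.subLeft fun _ => A) =
      n * A - ∫ x, ∑ k, |x k| ∂μ := by
  have hsum : ∀ᵐ x ∂μ, ∑ k, |x k| = ∑ k, x k ∧ ∑ k, |A - x k| = n * A - ∑ k, x k := by
    filter_upwards [hbox] with x hx
    have habs : ∀ k, |x k| = x k ∧ |A - x k| = A - x k := fun k =>
      ⟨abs_of_nonneg (hx k).1, abs_of_nonneg (sub_nonneg.2 (hx k).2)⟩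
    simp [habs, Finset.sum_sub_distrib]
  have hint : Integrable (fun x => ∑ k, x k) μ := by
    refine .of_bound (by fun_prop) (n * A) ?_
    filter_upwards [hbox] with x hx
    rw [Real.norm_of_nonneg (Finset.sum_nonneg fun k _ => (hx k).1)]
    simpa using Finset.sum_le_sum fun k (_ : k ∈ Finset.univ) => (hx k).2
  calc ∫ x, ∑ k, |x k| ∂μ.map (MeasurableEquiv.subLeft fun _ => A)
      = ∫ x, (n * A - ∑ k, x k) ∂μ := by
        rw [integral_map_equiv]
        exact integral_congr_ae (hsum.mono fun x hx => hx.2)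
    _ = n * A - ∫ x, ∑ k, |x k| ∂μ := by
        rw [integral_sub (integrable_const _) hint, integral_congr_ae (hsum.mono fun x hx => hx.1)]
        simp

end Admissible

theorem exists_admissible_half_mutualInfoJoint_eq {nt nr : ℕ} (H : Matrix (Fin nr) (Fin nt) ℝ)
    {A avg : ℝ} {μ : Measure (Fin nt → ℝ)} (hμ : Admissible nt A avg μ) :
    ∃ μ', Admissible nt A (nt / 2 * A) μ' ∧
      mutualInfoJoint (jointLaw H μ) = mutualInfoJoint (jointLaw H μ') := by
  obtain ⟨hprob, hbox, -⟩ := hμ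
  by_cases hhalf : ∫ x, ∑ k, |x k| ∂μ ≤ nt / 2 * A
  · exact ⟨μ, ⟨hprob, hbox, hhalf⟩, rfl⟩
  refine ⟨μ.map (MeasurableEquiv.subLeft fun _ => A),
    ⟨Measure.isProbabilityMeasure_map (by fun_prop), ae_mem_box_map_subLeft hbox, ?_⟩,
    (mutualInfoJoint_jointLaw_map_subLeft H _).symm⟩
  rw [integral_sum_abs_map_subLeft hbox]
  linarith

end MimoOptical

theorem MimoOptical.capacity_avgPower_inactive_general
    (nt nr : ℕ)
    (H : Matrix (Fin nr) (Fin nt) ℝ)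
    (A α : ℝ) (hA : 0 < A) (h : (nt : ℝ) / 2 < α) :
    MimoOptical.capacity H A (α * A) = MimoOptical.capacity H A ((nt : ℝ) / 2 * A) := by
  unfold MimoOptical.capacity
  congr 1
  ext c
  constructor
  · rintro ⟨μ, hμ, rfl⟩
    exact MimoOptical.exists_admissible_half_mutualInfoJoint_eq H hμ
  · rintro ⟨μ, hμ, rfl⟩
    exact ⟨μ, hμ.mono (mul_le_mul_of_nonneg_right h.le hA.le), rfl⟩

/-- If `α > nt/2`, the average-power constraint is inactive:
`C_H(A, αA) = C_H(A, (nt/2)A)`. -/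
theorem MimoOptical.capacity_avgPower_inactive
    (nt nr : ℕ) (hnr : 1 ≤ nr) (hntnr : nr < nt)
    (H : Matrix (Fin nr) (Fin nt) ℝ) (hrank : H.rank = nr)
    (A α : ℝ) (hA : 0 < A) (hα : 0 < α) (h : (nt : ℝ) / 2 < α) :
    MimoOptical.capacity H A (α * A) = MimoOptical.capacity H A ((nt : ℝ) / 2 * A) :=
  MimoOptical.capacity_avgPower_inactive_general nt nr H A α hA h
end
end

section
/- For each U ∈ 𝒰 define B_U = {x ∈ ℝ^nt : x_i ∈ (0,A) for all i ∈ U, and x_j = A·g_{U,j} for all j ∈ U^c}. Then for all x̄ ∈ R(H) except a subset of nr-dimensional Lebesgue measure zero, every minimizer of ‖x‖₁ over the set S(x̄) = {x ∈ [0,A]^nt : Hx = x̄} lies in ⋃_{U∈𝒰} B_U. -/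
open MeasureTheory ProbabilityTheory Matrix Filter Topology
open scoped ENNReal NNReal BigOperators

noncomputable section

/-- The set `B_U`: components in `U` lie in the open interval `(0,A)` and
components in `Uᶜ` equal `A g_{U,j}`. -/
def MimoOptical.BU {nt nr : ℕ} (H : Matrix (Fin nr) (Fin nt) ℝ) (A : ℝ)
    (U : Finset (Fin nt)) : Set (Fin nt → ℝ) :=
  { x | (∀ i ∈ U, x i ∈ Set.Ioo (0 : ℝ) A) ∧ ∀ j ∉ U, x j = A * MimoOptical.gUj H U j }

/-! Minimality of `x` is tested only along the kernel directions `e_j - γ_{U,j}` of `H`, along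
which `‖x‖₁` changes at rate `1 - a_{U,j}`. Since `x̄ - A ∑_{x_j = A} h_j` lies in the span of the
columns `h_i` with `x_i ∈ (0, A)`, these columns span `ℝ^nr` unless `x̄` lies in one of finitely
many proper affine subspaces; off that null set they contain a basis `U ∈ 𝒰`. For `j ∉ U`, moving
along `±(e_j - γ_{U,j})` stays in `S(x̄)` for a short time unless `x_j` sits at the corresponding
end of `[0, A]`; hence `a_{U,j} ≤ 1` if `x_j < A` and `a_{U,j} ≥ 1` if `x_j > 0`. As
`a_{U,j} ≠ 1`, `x_j` is `0` or `A`, according as `a_{U,j} < 1` or `a_{U,j} > 1`. -/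

namespace MimoOptical

open Function Submodule

variable {nt nr : ℕ}

lemma eq_zero_or_eq_of_mem_Icc_of_notMem_Ioo {A c : ℝ} (hc : c ∈ Set.Icc 0 A)
    (hc' : c ∉ Set.Ioo 0 A) : c = 0 ∨ c = A := by
  have : c ∈ ({0, A} : Set ℝ) := Set.Icc_sdiff_Ioo_same (hc.1.trans hc.2) ▸ ⟨hc, hc'⟩
  simpa using this

lemma eventually_nonneg_add_mul {c w : ℝ} (hc : 0 ≤ c) (hw : c = 0 → 0 ≤ w) :
    ∀ᶠ t in 𝓝[>] (0 : ℝ), 0 ≤ c + t * w := by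
  rcases hc.eq_or_lt with rfl | hc
  · filter_upwards [self_mem_nhdsWithin] with t ht
    simpa using mul_nonneg (le_of_lt ht) (hw rfl)
  · have hlim : Tendsto (fun t : ℝ => c + t * w) (𝓝[>] 0) (𝓝 c) :=
      ((by fun_prop : Continuous fun t : ℝ => c + t * w).tendsto' 0 c (by simp)).mono_left
        nhdsWithin_le_nhds
    exact (hlim.eventually (lt_mem_nhds hc)).mono fun _ => le_of_lt

lemma eventually_add_mul_mem_Icc {A c w : ℝ} (hc : c ∈ Set.Icc 0 A)
    (h0 : c = 0 → 0 ≤ w) (hA : c = A → w ≤ 0) :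
    ∀ᶠ t in 𝓝[>] (0 : ℝ), c + t * w ∈ Set.Icc 0 A := by
  have hup := eventually_nonneg_add_mul (c := A - c) (w := -w) (sub_nonneg.2 hc.2)
    fun h => neg_nonneg.2 (hA (sub_eq_zero.1 h).symm)
  filter_upwards [eventually_nonneg_add_mul hc.1 h0, hup] with t h0 hA
  exact ⟨h0, by linarith⟩

/-- `S(x̄)`. -/
def feasibleSet (H : Matrix (Fin nr) (Fin nt) ℝ) (A : ℝ) (xbar : Fin nr → ℝ) :
    Set (Fin nt → ℝ) :=
  {x | (∀ i, x i ∈ Set.Icc 0 A) ∧ H *ᵥ x = xbar}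

lemma sum_nonneg_of_isMinOn {H : Matrix (Fin nr) (Fin nt) ℝ} {A : ℝ} {xbar : Fin nr → ℝ}
    {x w : Fin nt → ℝ} (hx : x ∈ feasibleSet H A xbar)
    (hmin : IsMinOn (fun x => ∑ i, |x i|) (feasibleSet H A xbar) x) (hw : H *ᵥ w = 0)
    (hdir : ∀ i, (x i = 0 → 0 ≤ w i) ∧ (x i = A → w i ≤ 0)) :
    0 ≤ ∑ i, w i := by
  have hbox : ∀ᶠ t in 𝓝[>] (0 : ℝ), ∀ i, x i + t * w i ∈ Set.Icc 0 A :=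
    eventually_all.2 fun i => eventually_add_mul_mem_Icc (hx.1 i) (hdir i).1 (hdir i).2
  obtain ⟨t, hbox, ht⟩ := (hbox.and self_mem_nhdsWithin).exists
  have hmove : x + t • w ∈ feasibleSet H A xbar :=
    ⟨hbox, by rw [mulVec_add, mulVec_smul, hw, smul_zero, add_zero, hx.2]⟩
  have hle : ∑ i, x i ≤ ∑ i, x i + t * ∑ i, w i := by
    simpa [abs_of_nonneg (hx.1 _).1, abs_of_nonneg (hbox _).1, Finset.sum_add_distrib,
      Finset.mul_sum] using hmin hmove
  exact nonneg_of_mul_nonneg_right (by linarith) ht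

lemma sum_extend_zero {ι κ M : Type*} [Fintype ι] [Fintype κ] [AddCommMonoid M] {e : κ → ι}
    (he : Injective e) (g : κ → M) : ∑ i, extend e g 0 i = ∑ k, g k :=
  (Fintype.sum_of_injective e he g _ (fun i hi => extend_apply' g (0 : ι → M) i (by simpa using hi))
    fun k => (he.extend_apply g 0 k).symm).symm

lemma mulVec_extend_zero {m n k α : Type*} [Fintype n] [Fintype k]
    [NonUnitalNonAssocSemiring α] (M : Matrix m n α) {e : k → n} (he : Injective e)
    (g : k → α) : M *ᵥ extend e g 0 = M.submatrix id e *ᵥ g := by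
  ext r
  refine (Fintype.sum_of_injective e he _ _ (fun i hi => ?_) fun k => ?_).symm
  · simp [extend_apply' _ _ _ hi]
  · simp [he.extend_apply]

lemma mulVec_eq_sum_smul_col {m n R : Type*} [Fintype n] [CommSemiring R] (M : Matrix m n R)
    (v : n → R) : M *ᵥ v = ∑ j, v j • M.col j := by
  simp [mulVec_eq_sum, op_smul_eq_smul, col_def]

section KernelVector

variable {H : Matrix (Fin nr) (Fin nt) ℝ} {U : Finset (Fin nt)}

lemma HU_eq_submatrix (hcard : U.card = nr) : HU H U = H.submatrix id (U.orderEmbOfFin hcard) :=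
  dif_pos hcard

lemma isUnit_det_HU (hU : U ∈ goodSets H) : IsUnit (HU H U).det := by
  rw [← isUnit_iff_isUnit_det, HU_eq_submatrix hU.1, ← linearIndependent_cols_iff_isUnit]
  exact hU.2.comp _ (U.orderIsoOfFin hU.1).toEquiv.injective

variable (H U) in
/-- `e_j - γ_{U,j}`, with `γ_{U,j} = H_U⁻¹ h_j` placed on the coordinates of `U`. -/
def kerVec (hcard : U.card = nr) (j : Fin nt) : Fin nt → ℝ :=
  Pi.single j 1 - extend (U.orderEmbOfFin hcard) ((HU H U)⁻¹ *ᵥ H.col j) 0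

lemma mulVec_kerVec (hU : U ∈ goodSets H) (j : Fin nt) : H *ᵥ kerVec H U hU.1 j = 0 := by
  rw [kerVec, mulVec_sub, mulVec_extend_zero _ (U.orderEmbOfFin hU.1).injective,
    ← HU_eq_submatrix, mulVec_mulVec, mul_nonsing_inv _ (isUnit_det_HU hU), one_mulVec,
    mulVec_single, MulOpposite.op_one, one_smul, sub_self]

lemma sum_kerVec (hcard : U.card = nr) (j : Fin nt) :
    ∑ i, kerVec H U hcard j i = 1 - aUj H U j := by
  simp only [kerVec, Pi.sub_apply, Finset.sum_sub_distrib, Finset.sum_pi_single',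
    Finset.mem_univ, if_true, sum_extend_zero (U.orderEmbOfFin hcard).injective, aUj]
  rfl

lemma kerVec_apply_of_notMem (hcard : U.card = nr) {i j : Fin nt} (hi : i ∉ U) :
    kerVec H U hcard j i = Pi.single (M := fun _ => ℝ) j 1 i := by
  rw [kerVec, Pi.sub_apply, extend_apply', Pi.zero_apply, sub_zero]
  rintro ⟨k, rfl⟩
  exact hi (U.orderEmbOfFin_mem hcard k)

end KernelVector

variable {H : Matrix (Fin nr) (Fin nt) ℝ} {A : ℝ}

variable (A) in
def interiorIndices (x : Fin nt → ℝ) : Finset (Fin nt) :=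
  Finset.univ.filter fun i => x i ∈ Set.Ioo 0 A

variable (H A) in
def exceptionalSet : Set (Fin nr → ℝ) :=
  ⋃ (S : Finset (Fin nt)) (_ : span ℝ (H.col '' S) ≠ ⊤) (P : Finset (Fin nt)),
    (AffineSubspace.mk' (A • ∑ j ∈ P, H.col j) (span ℝ (H.col '' S)) : Set (Fin nr → ℝ))

variable (H A) in
lemma volume_exceptionalSet : volume (exceptionalSet H A) = 0 := by
  refine measure_iUnion_null fun S => measure_iUnion_null fun hS => measure_iUnion_null fun P => ?_
  refine Measure.addHaar_affineSubspace _ _ fun htop => hS ?_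
  rw [← AffineSubspace.direction_mk' (A • ∑ j ∈ P, H.col j) (span ℝ (H.col '' S)), htop,
    AffineSubspace.direction_top]

lemma mulVec_mem_exceptionalSet {x : Fin nt → ℝ} (hx : ∀ i, x i ∈ Set.Icc 0 A)
    (hspan : span ℝ (H.col '' interiorIndices A x) ≠ ⊤) : H *ᵥ x ∈ exceptionalSet H A := by
  classical
  refine Set.mem_iUnion₂.2 ⟨interiorIndices A x, hspan,
    Set.mem_iUnion.2 ⟨Finset.univ.filter (x · = A), ?_⟩⟩
  have hsplit : H *ᵥ x - A • ∑ j ∈ Finset.univ.filter (x · = A), H.col j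
      = ∑ j, (x j - if x j = A then A else 0) • H.col j := by
    simp only [mulVec_eq_sum_smul_col, Finset.smul_sum, Finset.sum_filter, sub_smul, ite_smul,
      smul_ite, smul_zero, zero_smul, Finset.sum_sub_distrib]
  rw [SetLike.mem_coe, AffineSubspace.mem_mk', vsub_eq_sub, hsplit]
  refine sum_mem fun j _ => ?_
  by_cases hj : x j ∈ Set.Ioo 0 A
  · exact smul_mem _ _ (subset_span ⟨j, by simpa [interiorIndices] using hj, rfl⟩)
  split_ifs with hjA
  · simp [hjA]
  · simp [(eq_zero_or_eq_of_mem_Icc_of_notMem_Ioo (hx j) hj).resolve_right hjA]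

lemma exists_mem_goodSets_subset {S : Finset (Fin nt)} (hS : span ℝ (H.col '' S) = ⊤) :
    ∃ U ∈ goodSets H, U ⊆ S := by
  obtain ⟨b, hbS, -, hSb, hb⟩ :=
    exists_linearIndepOn_extension (linearIndepOn_empty ℝ H.col) (Set.empty_subset (S : Set _))
  lift b to Finset (Fin nt) using S.finite_toSet.subset hbS
  refine ⟨b, ⟨?_, hb⟩, by exact_mod_cast hbS⟩
  have hspan : span ℝ (H.col '' b) = ⊤ := eq_top_iff.2 (hS ▸ span_le.2 hSb)
  have hcard := linearIndependent_iff_card_eq_finrank_span.1 hb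
  rw [Set.finrank, ← Set.image_eq_range, hspan, finrank_top, Module.finrank_fin_fun] at hcard
  simpa using hcard

section Minimizer

variable {xbar : Fin nr → ℝ} {x : Fin nt → ℝ} (hx : x ∈ feasibleSet H A xbar)
  (hmin : IsMinOn (fun x => ∑ i, |x i|) (feasibleSet H A xbar) x)
  {U : Finset (Fin nt)} (hU : U ∈ goodSets H) (hUx : ∀ i ∈ U, x i ∈ Set.Ioo 0 A)
  {j : Fin nt} (hj : j ∉ U)
include hx hmin hU hUx hj

lemma mul_one_sub_aUj_nonneg {ε : ℝ} (h0 : x j = 0 → 0 ≤ ε) (hA : x j = A → ε ≤ 0) :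
    0 ≤ ε * (1 - aUj H U j) := by
  rw [← sum_kerVec hU.1, Finset.mul_sum]
  refine sum_nonneg_of_isMinOn hx hmin (w := ε • kerVec H U hU.1 j)
    (by rw [mulVec_smul, mulVec_kerVec hU, smul_zero]) fun i => ?_
  by_cases hi : i ∈ U
  · exact ⟨fun h => absurd h (hUx i hi).1.ne', fun h => absurd h (hUx i hi).2.ne⟩
  rw [Pi.smul_apply, kerVec_apply_of_notMem _ hi, smul_eq_mul]
  by_cases hij : i = j
  · subst hij
    simpa using And.intro h0 hA
  · simp [hij]

lemma aUj_lt_one (haj : aUj H U j ≠ 1) (hxj : x j ≠ A) : aUj H U j < 1 := by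
  have := mul_one_sub_aUj_nonneg hx hmin hU hUx hj (ε := 1) (fun _ => zero_le_one)
    fun h => absurd h hxj
  exact lt_of_le_of_ne (by linarith) haj

lemma one_lt_aUj (haj : aUj H U j ≠ 1) (hxj : x j ≠ 0) : 1 < aUj H U j := by
  have := mul_one_sub_aUj_nonneg hx hmin hU hUx hj (ε := -1) (fun h => absurd h hxj)
    fun _ => by norm_num
  exact lt_of_le_of_ne (by linarith) haj.symm

end Minimizer

end MimoOptical

theorem MimoOptical.minimizers_mem_BU_general
    (nt nr : ℕ)
    (H : Matrix (Fin nr) (Fin nt) ℝ)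
    (A : ℝ) (hA : 0 < A)
    (htie : ∀ U ∈ MimoOptical.goodSets H, ∀ j ∉ U, MimoOptical.aUj H U j ≠ 1) :
    ∃ N : Set (Fin nr → ℝ), MeasureTheory.volume N = 0 ∧
      ∀ xbar ∈ MimoOptical.zonotope H A, xbar ∉ N →
        ∀ x : Fin nt → ℝ, (∀ i, x i ∈ Set.Icc (0 : ℝ) A) → H.mulVec x = xbar →
          (∀ x' : Fin nt → ℝ, (∀ i, x' i ∈ Set.Icc (0 : ℝ) A) → H.mulVec x' = xbar →
            (∑ i, |x i|) ≤ ∑ i, |x' i|) →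
          x ∈ ⋃ U ∈ MimoOptical.goodSets H, MimoOptical.BU H A U := by
  refine ⟨exceptionalSet H A, volume_exceptionalSet H A, ?_⟩
  rintro _ - hxbar x hx rfl hmin
  have hxS : x ∈ feasibleSet H A (H *ᵥ x) := ⟨hx, rfl⟩
  have hmin : IsMinOn (fun x => ∑ i, |x i|) (feasibleSet H A (H *ᵥ x)) x :=
    fun x' hx' => hmin x' hx'.1 hx'.2
  obtain ⟨U, hU, hUx⟩ := exists_mem_goodSets_subset
    (not_not.1 fun hspan => hxbar (mulVec_mem_exceptionalSet hx hspan))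
  replace hUx : ∀ i ∈ U, x i ∈ Set.Ioo 0 A := fun i hi => by simpa [interiorIndices] using hUx hi
  refine Set.mem_biUnion hU ⟨hUx, fun j hj => ?_⟩
  have hlt := aUj_lt_one hxS hmin hU hUx hj (htie U hU j hj)
  have hgt := one_lt_aUj hxS hmin hU hUx hj (htie U hU j hj)
  by_cases hxj : x j ∈ Set.Ioo 0 A
  · exact absurd ((hlt hxj.2.ne).trans (hgt hxj.1.ne')) (lt_irrefl _)
  rcases eq_zero_or_eq_of_mem_Icc_of_notMem_Ioo (hx j) hxj with h | h
  · rw [gUj, if_neg (hlt (h ▸ hA.ne)).not_gt, mul_zero, h]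
  · rw [gUj, if_pos (hgt (h ▸ hA.ne')), mul_one, h]

/-- For all `x̄ ∈ R(H)` outside a set of Lebesgue measure zero,
every minimizer of the `ℓ₁`-norm over `S(x̄) = {x ∈ [0,A]^nt : Hx = x̄}` lies in
`⋃_{U ∈ 𝒰} B_U`. -/
theorem MimoOptical.minimizers_mem_BU
    (nt nr : ℕ) (hnr : 1 ≤ nr) (hntnr : nr < nt)
    (H : Matrix (Fin nr) (Fin nt) ℝ) (hrank : H.rank = nr)
    (A : ℝ) (hA : 0 < A)
    (htie : ∀ U ∈ MimoOptical.goodSets H, ∀ j ∉ U, MimoOptical.aUj H U j ≠ 1) :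
    ∃ N : Set (Fin nr → ℝ), MeasureTheory.volume N = 0 ∧
      ∀ xbar ∈ MimoOptical.zonotope H A, xbar ∉ N →
        ∀ x : Fin nt → ℝ, (∀ i, x i ∈ Set.Icc (0 : ℝ) A) → H.mulVec x = xbar →
          (∀ x' : Fin nt → ℝ, (∀ i, x' i ∈ Set.Icc (0 : ℝ) A) → H.mulVec x' = xbar →
            (∑ i, |x i|) ≤ ∑ i, |x' i|) →
          x ∈ ⋃ U ∈ MimoOptical.goodSets H, MimoOptical.BU H A U :=
  MimoOptical.minimizers_mem_BU_general nt nr H A hA htie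
end
end

section
/- There exists a distribution P_X on [0,A]^nt satisfying E[‖X‖₁] ≤ αA that maximizes tr(Cov(HX)) over all such distributions and for which each component takes only the values 0 and A: P(X_i ∈ {0, A}) = 1 for every i = 1,…,nt. -/
open MeasureTheory ProbabilityTheory Matrix Filter Topology
open scoped ENNReal NNReal BigOperators

noncomputable section

namespace MimoOptical

variable {nt nr : ℕ}

/-! Rounding each coordinate of a point `x ∈ [0, A]^ι` independently to `A` with probability
`x i / A` and to `0` otherwise turns any input law into a law on the corners `{0, A}^ι` with the
same mean, hence the same average power and the same `E[H X]`; by Jensen's inequality it can only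
increase `E[(H X)_i ^ 2]`. So `tr Cov(H X)` is maximized over corner laws, which form a compact
finite-dimensional family on which it is a continuous function of the weights. -/

section Corners

variable {ι : Type*}

def corner (A : ℝ) (s : ι → Bool) : ι → ℝ := fun i => if s i then A else 0

lemma corner_apply_eq_zero_or (A : ℝ) (s : ι → Bool) (k : ι) :
    corner A s k = 0 ∨ corner A s k = A := by
  unfold corner
  split_ifs <;> simp

lemma corner_mem_Icc {A : ℝ} (hA : 0 ≤ A) (s : ι → Bool) (k : ι) :
    corner A s k ∈ Set.Icc 0 A := by
  rcases corner_apply_eq_zero_or A s k with h | h <;> simp [h, hA]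

variable [Fintype ι]

def cornerWeight (A : ℝ) (s : ι → Bool) (x : ι → ℝ) : ℝ :=
  ∏ i, if s i then x i / A else 1 - x i / A

lemma cornerWeight_nonneg {A : ℝ} (hA : 0 < A) {x : ι → ℝ} (hx : ∀ i, x i ∈ Set.Icc 0 A)
    (s : ι → Bool) : 0 ≤ cornerWeight A s x := by
  refine Finset.prod_nonneg fun i _ => ?_
  have : x i / A ≤ 1 := div_le_one_of_le₀ (hx i).2 hA.le
  split_ifs <;> linarith [div_nonneg (hx i).1 hA.le]

@[fun_prop]
lemma continuous_cornerWeight (A : ℝ) (s : ι → Bool) : Continuous (cornerWeight A s) := by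
  refine continuous_finsetProd _ fun i _ => ?_
  split_ifs <;> fun_prop

variable [DecidableEq ι]

lemma sum_prod_apply_bool {R : Type*} [CommSemiring R] (g : ι → Bool → R) :
    ∑ s : ι → Bool, ∏ i, g i (s i) = ∏ i, (g i true + g i false) := by
  simp only [← Fintype.sum_bool, Fintype.prod_sum]

lemma sum_cornerWeight (A : ℝ) (x : ι → ℝ) : ∑ s, cornerWeight A s x = 1 := by
  simp only [cornerWeight]
  rw [sum_prod_apply_bool (fun i b => if b then x i / A else 1 - x i / A)]
  exact Finset.prod_eq_one fun i _ => by simp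

lemma sum_cornerWeight_mul_corner {A : ℝ} (hA : A ≠ 0) (x : ι → ℝ) (k : ι) :
    ∑ s, cornerWeight A s x * corner A s k = x k := by
  -- Absorb the factor `corner A s k` into the `k`-th factor of the product.
  set g : ι → Bool → ℝ := fun i b =>
    (if b then x i / A else 1 - x i / A) * if i = k then (if b then A else 0) else 1
  have hfactor (s : ι → Bool) : cornerWeight A s x * corner A s k = ∏ i, g i (s i) := by
    simp only [g, Finset.prod_mul_distrib, Finset.prod_ite_eq', Finset.mem_univ, if_true,
      cornerWeight, corner]
  rw [Finset.sum_congr rfl fun s _ => hfactor s, sum_prod_apply_bool,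
    Finset.prod_eq_single k (fun i _ hik => by simp [g, hik]) (by simp)]
  simp [g, hA]

lemma sum_cornerWeight_smul_corner {A : ℝ} (hA : A ≠ 0) (x : ι → ℝ) :
    ∑ s, cornerWeight A s x • corner A s = x := by
  ext k
  simpa using sum_cornerWeight_mul_corner hA x k

lemma _root_.ConvexOn.le_sum_cornerWeight_mul {A : ℝ} (hA : 0 < A) {x : ι → ℝ}
    (hx : ∀ i, x i ∈ Set.Icc 0 A) {f : (ι → ℝ) → ℝ} (hf : ConvexOn ℝ Set.univ f) :
    f x ≤ ∑ s, cornerWeight A s x * f (corner A s) := by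
  simpa [sum_cornerWeight_smul_corner hA.ne'] using
    hf.map_sum_le (fun s _ => cornerWeight_nonneg hA hx s) (sum_cornerWeight A x)
      (fun s _ => Set.mem_univ (corner A s))

def cornerMeasure (A : ℝ) (p : (ι → Bool) → ℝ) : Measure (ι → ℝ) :=
  ∑ s, ENNReal.ofReal (p s) • Measure.dirac (corner A s)

lemma integral_cornerMeasure (A : ℝ) {p : (ι → Bool) → ℝ} (hp : ∀ s, 0 ≤ p s)
    (f : (ι → ℝ) → ℝ) : ∫ x, f x ∂cornerMeasure A p = ∑ s, p s * f (corner A s) := by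
  rw [cornerMeasure, integral_finsetSum_measure fun s _ =>
    (integrable_dirac enorm_lt_top).smul_measure ENNReal.ofReal_ne_top]
  simp [integral_smul_measure, ENNReal.toReal_ofReal (hp _)]

lemma cornerMeasure_apply_eq_one (A : ℝ) {p : (ι → Bool) → ℝ} (hp : ∀ s, 0 ≤ p s)
    (hp1 : ∑ s, p s = 1) {E : Set (ι → ℝ)} (hE : MeasurableSet E) (hmem : ∀ s, corner A s ∈ E) :
    cornerMeasure A p E = 1 := by
  simp [cornerMeasure, Measure.dirac_apply' _ hE, hmem, ← ENNReal.ofReal_sum_of_nonneg, hp, hp1]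

lemma isProbabilityMeasure_cornerMeasure (A : ℝ) {p : (ι → Bool) → ℝ} (hp : ∀ s, 0 ≤ p s)
    (hp1 : ∑ s, p s = 1) : IsProbabilityMeasure (cornerMeasure A p) :=
  ⟨cornerMeasure_apply_eq_one A hp hp1 MeasurableSet.univ fun _ => Set.mem_univ _⟩

lemma ae_cornerMeasure (A : ℝ) {p : (ι → Bool) → ℝ} (hp : ∀ s, 0 ≤ p s) (hp1 : ∑ s, p s = 1)
    {E : Set (ι → ℝ)} (hE : MeasurableSet E) (hmem : ∀ s, corner A s ∈ E) :
    ∀ᵐ x ∂cornerMeasure A p, x ∈ E := by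
  have := isProbabilityMeasure_cornerMeasure A hp hp1
  rw [ae_mem_iff_measure_eq hE.nullMeasurableSet, measure_univ]
  exact cornerMeasure_apply_eq_one A hp hp1 hE hmem

def cornerSimplex (A avg : ℝ) : Set ((ι → Bool) → ℝ) :=
  {p | (∀ s, 0 ≤ p s) ∧ ∑ s, p s = 1 ∧ ∑ s, p s * ∑ k, corner A s k ≤ avg}

lemma isCompact_cornerSimplex (A avg : ℝ) : IsCompact (cornerSimplex (ι := ι) A avg) := by
  have hclosed : IsClosed (cornerSimplex (ι := ι) A avg) := by
    simp only [cornerSimplex, Set.ofPred_and, Set.ofPred_forall]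
    refine (isClosed_iInter fun s => isClosed_le continuous_const (continuous_apply s)).inter
      ((isClosed_eq (by fun_prop) continuous_const).inter
        (isClosed_le (by fun_prop) continuous_const))
  refine (isCompact_Icc (a := 0) (b := 1)).of_isClosed_subset hclosed
    fun p ⟨hp0, hp1, _⟩ => ⟨hp0, fun s => ?_⟩
  exact (Finset.single_le_sum (fun s _ => hp0 s) (Finset.mem_univ s)).trans_eq hp1

lemma cornerSimplex_nonempty (A : ℝ) {avg : ℝ} (havg : 0 ≤ avg) :
    (cornerSimplex (ι := ι) A avg).Nonempty :=
  ⟨Pi.single (fun _ => false) 1, fun s => by simp [Pi.single_apply]; positivity, by simp,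
    by simpa [Pi.single_apply, corner] using havg⟩

end Corners

lemma _root_.Continuous.integrable_of_ae_mem_isCompact {X : Type*} [TopologicalSpace X]
    [MeasurableSpace X] [OpensMeasurableSpace X] {μ : Measure X} [IsFiniteMeasure μ] {K : Set X}
    (hK : IsCompact K) (hμ : ∀ᵐ x ∂μ, x ∈ K) {f : X → ℝ} (hf : Continuous f) :
    Integrable f μ := by
  obtain ⟨C, hC⟩ := hK.exists_bound_of_continuousOn hf.continuousOn
  refine Integrable.mono' (integrable_const C) hf.aestronglyMeasurable ?_
  filter_upwards [hμ] with x hx using hC x hx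

section Rounding

variable {ι : Type*} [Fintype ι] {A : ℝ} {ν : Measure (ι → ℝ)}

def cornerWeights (A : ℝ) (ν : Measure (ι → ℝ)) (s : ι → Bool) : ℝ :=
  ∫ x, cornerWeight A s x ∂ν

lemma cornerWeights_nonneg (hA : 0 < A) (hν : ∀ᵐ x ∂ν, ∀ k, x k ∈ Set.Icc 0 A) (s : ι → Bool) :
    0 ≤ cornerWeights A ν s :=
  integral_nonneg_of_ae (hν.mono fun _ hx => cornerWeight_nonneg hA hx s)

lemma _root_.Continuous.integrable_of_ae_mem_box [IsFiniteMeasure ν]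
    (hν : ∀ᵐ x ∂ν, ∀ k, x k ∈ Set.Icc 0 A) {f : (ι → ℝ) → ℝ} (hf : Continuous f) : Integrable f ν :=
  hf.integrable_of_ae_mem_isCompact (isCompact_univ_pi fun _ => isCompact_Icc (a := 0) (b := A))
    (by simpa only [Set.mem_univ_pi] using hν)

variable [DecidableEq ι] [IsProbabilityMeasure ν]

lemma sum_cornerWeights (hν : ∀ᵐ x ∂ν, ∀ k, x k ∈ Set.Icc 0 A) :
    ∑ s, cornerWeights A ν s = 1 := by
  simp only [cornerWeights]
  rw [← integral_finsetSum _ fun s _ => (continuous_cornerWeight A s).integrable_of_ae_mem_box hν]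
  simp [sum_cornerWeight]

lemma integral_cornerMeasure_cornerWeights (hA : 0 < A) (hν : ∀ᵐ x ∂ν, ∀ k, x k ∈ Set.Icc 0 A)
    (f : (ι → ℝ) → ℝ) : ∫ y, f y ∂cornerMeasure A (cornerWeights A ν)
      = ∫ x, ∑ s, cornerWeight A s x * f (corner A s) ∂ν := by
  rw [integral_cornerMeasure A (cornerWeights_nonneg hA hν), integral_finsetSum _ fun s _ =>
    ((continuous_cornerWeight A s).integrable_of_ae_mem_box hν).mul_const _]
  simp only [cornerWeights, integral_mul_const]

lemma _root_.LinearMap.integral_cornerMeasure_cornerWeights (hA : 0 < A)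
    (hν : ∀ᵐ x ∂ν, ∀ k, x k ∈ Set.Icc 0 A) (L : (ι → ℝ) →ₗ[ℝ] ℝ) :
    ∫ y, L y ∂cornerMeasure A (cornerWeights A ν) = ∫ x, L x ∂ν := by
  rw [MimoOptical.integral_cornerMeasure_cornerWeights hA hν]
  congr 1 with x
  simpa using congrArg L (sum_cornerWeight_smul_corner hA.ne' x)

lemma _root_.ConvexOn.integral_le_integral_cornerMeasure_cornerWeights (hA : 0 < A)
    (hν : ∀ᵐ x ∂ν, ∀ k, x k ∈ Set.Icc 0 A) {f : (ι → ℝ) → ℝ} (hf : ConvexOn ℝ Set.univ f)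
    (hfc : Continuous f) : ∫ x, f x ∂ν ≤ ∫ y, f y ∂cornerMeasure A (cornerWeights A ν) := by
  rw [integral_cornerMeasure_cornerWeights hA hν]
  exact integral_mono_ae (hfc.integrable_of_ae_mem_box hν)
    ((by fun_prop : Continuous _).integrable_of_ae_mem_box hν)
    (hν.mono fun _ hx => hf.le_sum_cornerWeight_mul hA hx)

end Rounding

section Admissible

variable {A avg : ℝ}

lemma Admissible.cornerWeights_mem_cornerSimplex (hA : 0 < A) {ν : Measure (Fin nt → ℝ)}
    (hν : Admissible nt A avg ν) : cornerWeights A ν ∈ cornerSimplex A avg := by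
  obtain ⟨hprob, hbox, hpow⟩ := hν
  refine ⟨cornerWeights_nonneg hA hbox, sum_cornerWeights hbox, ?_⟩
  have hmean : ∑ s, cornerWeights A ν s * ∑ k, corner A s k = ∫ x, ∑ k, x k ∂ν := by
    rw [← integral_cornerMeasure A (cornerWeights_nonneg hA hbox)]
    simpa using (∑ k, LinearMap.proj k : (Fin nt → ℝ) →ₗ[ℝ] ℝ
      ).integral_cornerMeasure_cornerWeights hA hbox
  calc _ = ∫ x, ∑ k, |x k| ∂ν := hmean.trans <| integral_congr_ae <| hbox.mono fun x hx =>
          Finset.sum_congr rfl fun k _ => (abs_of_nonneg (hx k).1).symm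
    _ ≤ avg := hpow

lemma admissible_cornerMeasure (hA : 0 ≤ A) {p : (Fin nt → Bool) → ℝ}
    (hp : p ∈ cornerSimplex A avg) : Admissible nt A avg (cornerMeasure A p) := by
  obtain ⟨hp0, hp1, hpow⟩ := hp
  refine ⟨isProbabilityMeasure_cornerMeasure A hp0 hp1, ?_, ?_⟩
  · simpa only [Set.mem_univ_pi] using ae_cornerMeasure A hp0 hp1
      (MeasurableSet.univ_pi fun _ => measurableSet_Icc)
      fun s => Set.mem_univ_pi.2 (corner_mem_Icc hA s)
  · rw [integral_cornerMeasure A hp0]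
    simpa [abs_of_nonneg (corner_mem_Icc hA _ _).1] using hpow

lemma traceCov_cornerMeasure (H : Matrix (Fin nr) (Fin nt) ℝ) {p : (Fin nt → Bool) → ℝ}
    (hp : ∀ s, 0 ≤ p s) : traceCov H (cornerMeasure A p) =
      ∑ i, (∑ s, p s * (H *ᵥ corner A s) i ^ 2 - (∑ s, p s * (H *ᵥ corner A s) i) ^ 2) := by
  simp only [traceCov, integral_cornerMeasure A hp]

lemma continuousOn_traceCov_cornerMeasure (H : Matrix (Fin nr) (Fin nt) ℝ) :
    ContinuousOn (fun p => traceCov H (cornerMeasure A p)) (cornerSimplex A avg) :=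
  have hcont : Continuous fun p : (Fin nt → Bool) → ℝ => ∑ i,
      (∑ s, p s * (H *ᵥ corner A s) i ^ 2 - (∑ s, p s * (H *ᵥ corner A s) i) ^ 2) := by
    fun_prop
  hcont.continuousOn.congr fun _ hp => traceCov_cornerMeasure H hp.1

lemma Admissible.traceCov_le_traceCov_cornerMeasure (H : Matrix (Fin nr) (Fin nt) ℝ)
    (hA : 0 < A) {ν : Measure (Fin nt → ℝ)} (hν : Admissible nt A avg ν) :
    traceCov H ν ≤ traceCov H (cornerMeasure A (cornerWeights A ν)) := by
  obtain ⟨hprob, hbox, -⟩ := hν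
  refine Finset.sum_le_sum fun i _ => sub_le_sub ?_ (le_of_eq ?_)
  · set L : (Fin nt → ℝ) →ₗ[ℝ] ℝ := (LinearMap.proj i).comp H.mulVecLin
    exact (even_two.convexOn_pow.comp_affineMap L.toAffineMap
      ).integral_le_integral_cornerMeasure_cornerWeights hA hbox
        ((continuous_pow 2).comp L.continuous_of_finiteDimensional)
  · congr 1
    exact ((LinearMap.proj i).comp H.mulVecLin).integral_cornerMeasure_cornerWeights hA hbox

end Admissible

end MimoOptical

theorem MimoOptical.exists_binary_traceCov_maximizer_general
    (nt nr : ℕ)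
    (H : Matrix (Fin nr) (Fin nt) ℝ)
    (A α : ℝ) (hA : 0 < A) (hα : 0 < α) :
    ∃ μ : Measure (Fin nt → ℝ), MimoOptical.Admissible nt A (α * A) μ ∧
      (∀ ν : Measure (Fin nt → ℝ), MimoOptical.Admissible nt A (α * A) ν →
        MimoOptical.traceCov H ν ≤ MimoOptical.traceCov H μ) ∧
      ∀ i : Fin nt, μ { x | x i = 0 ∨ x i = A } = 1 := by
  obtain ⟨p, hp, hpmax⟩ := (isCompact_cornerSimplex A (α * A)).exists_isMaxOn
    (cornerSimplex_nonempty A (by positivity)) (continuousOn_traceCov_cornerMeasure H)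
  refine ⟨cornerMeasure A p, admissible_cornerMeasure hA.le hp, fun ν hν => ?_, fun i => ?_⟩
  · exact (hν.traceCov_le_traceCov_cornerMeasure H hA).trans
      (hpmax (hν.cornerWeights_mem_cornerSimplex hA))
  · refine cornerMeasure_apply_eq_one A hp.1 hp.2.1
      ((measurableSet_eq_fun (measurable_pi_apply i) measurable_const).union
        (measurableSet_eq_fun (measurable_pi_apply i) measurable_const))
      fun s => corner_apply_eq_zero_or A s i

/-- There exists a maximizer of `tr(Cov(HX))` over all admissible
input distributions whose components take only the values `0` and `A`. -/
theorem MimoOptical.exists_binary_traceCov_maximizer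
    (nt nr : ℕ) (hnr : 1 ≤ nr) (hntnr : nr < nt)
    (H : Matrix (Fin nr) (Fin nt) ℝ) (hrank : H.rank = nr)
    (A α : ℝ) (hA : 0 < A) (hα : 0 < α) :
    ∃ μ : Measure (Fin nt → ℝ), MimoOptical.Admissible nt A (α * A) μ ∧
      (∀ ν : Measure (Fin nt → ℝ), MimoOptical.Admissible nt A (α * A) ν →
        MimoOptical.traceCov H ν ≤ MimoOptical.traceCov H μ) ∧
      ∀ i : Fin nt, μ { x | x i = 0 ∨ x i = A } = 1 :=
  MimoOptical.exists_binary_traceCov_maximizer_general nt nr H A α hA hα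
end
end
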